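/- Let f : ℕ → ℝ be defined by f(n) = c₆(n - n^{1 - 1/(7t)}) for constants c₆ > 0 and integer t ≥ 1. Suppose n1 + n2 ≤ n + n^{5/6} with n'/3 ≤ n1, n2 ≤ 2n'/3 where n' = n1 + n2, and suppose b ≤ 2c₅ n^{1 - 1/(4t)} with c₆ ≥ 2c₅. Then for all sufficiently large n (depending only on t, c₅), f(n1) + f(n2) + b ≤ f(n). -/

import Mathlib

/-!
Write `g x = x - x ^ β` with `β = 1 - 1/(7t)`. By concavity of `x ↦ x ^ β`, a split of `S = n₁ + n₂`
into parts between `S/3` and `2S/3` gains `n₁ ^ β + n₂ ^ β ≥ α S ^ β` with `α = (1/3)^β + (2/3)^β > 1`.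
When `S ≥ n/2` this gain, of order `n ^ β`, absorbs both the excess `S - n ≤ n ^ (5/6)` created by
vertex splitting and the bisection width `b = O(n ^ (1 - 1/(4t)))`, since both exponents are smaller
than `β`. When `S < n/2` the bound is trivial, as `g n ≥ n/2 + b` for large `n`.
-/

open Filter Real Set

theorem ConcaveOn.add_le_add_of_majorized {s : Set ℝ} {f : ℝ → ℝ} (hf : ConcaveOn ℝ s f)
    {a b x y : ℝ} (ha : a ∈ s) (hb : b ∈ s) (hx : x ∈ Icc a b) (hxy : x + y = a + b) :
    f a + f b ≤ f x + f y := by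
  obtain ⟨hax, hxb⟩ := hx
  rcases hax.lt_or_eq with hax | rfl
  · have hab : 0 < b - a := by linarith
    set θ := (b - x) / (b - a)
    have hθ0 : 0 ≤ θ := div_nonneg (by linarith) hab.le
    have hθ1 : 0 ≤ 1 - θ := by
      rw [sub_nonneg, div_le_one hab]; linarith
    have hx' : θ • a + (1 - θ) • b = x := by
      simp only [θ, smul_eq_mul]; field_simp; ring
    have hy' : (1 - θ) • a + θ • b = y := by
      obtain rfl : y = a + b - x := by linarith
      simp only [θ, smul_eq_mul]; field_simp; ring
    have h₁ := hf.2 ha hb hθ0 hθ1 (by ring)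
    have h₂ := hf.2 ha hb hθ1 hθ0 (by ring)
    rw [hx'] at h₁
    rw [hy'] at h₂
    simp only [smul_eq_mul] at h₁ h₂
    linarith
  · obtain rfl : y = b := by linarith
    rfl

theorem one_lt_rpow_third_add_rpow_two_thirds {β : ℝ} (hβ : β < 1) :
    1 < (1 / 3 : ℝ) ^ β + (2 / 3 : ℝ) ^ β := by
  have h₁ := rpow_lt_rpow_of_exponent_gt (x := 1 / 3) (by norm_num) (by norm_num) hβ
  have h₂ := rpow_lt_rpow_of_exponent_gt (x := 2 / 3) (by norm_num) (by norm_num) hβ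
  rw [rpow_one] at h₁ h₂
  linarith

theorem rpow_third_add_rpow_two_thirds_mul_le {β s x : ℝ} (hβ0 : 0 ≤ β) (hβ1 : β ≤ 1)
    (hx : x ∈ Icc (s / 3) (2 * s / 3)) :
    ((1 / 3 : ℝ) ^ β + (2 / 3 : ℝ) ^ β) * s ^ β ≤ x ^ β + (s - x) ^ β := by
  have hs : 0 ≤ s := by linarith [hx.1, hx.2]
  have h := (concaveOn_rpow hβ0 hβ1).add_le_add_of_majorized
    (mem_Ici.2 (by positivity : 0 ≤ s / 3)) (mem_Ici.2 (by positivity : 0 ≤ 2 * s / 3)) hx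
    (y := s - x) (by ring)
  rwa [show s / 3 = 1 / 3 * s by ring, show 2 * s / 3 = 2 / 3 * s by ring,
    mul_rpow (by norm_num) hs, mul_rpow (by norm_num) hs, ← add_mul] at h

theorem natCast_sub_rpow_le {β e : ℝ} (hβ0 : 0 ≤ β) (hβ1 : β ≤ 1) (he : 0 ≤ e) {m n : ℕ}
    (hmn : (m : ℝ) ≤ n + e) : (m : ℝ) - (m : ℝ) ^ β ≤ n - (n : ℝ) ^ β + e := by
  rcases le_or_gt n m with hnm | hmn'
  · have := rpow_le_rpow n.cast_nonneg (Nat.cast_le.2 hnm) hβ0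
    linarith
  -- the gap `n - m` is a positive integer, hence at least its own `β`-th power
  obtain ⟨d, rfl⟩ := Nat.exists_eq_add_of_lt hmn'
  have hd : (1 : ℝ) ≤ (d + 1 : ℕ) := by exact_mod_cast Nat.le_add_left 1 d
  have h₁ := rpow_add_le_add_rpow m.cast_nonneg (by positivity : (0 : ℝ) ≤ (d + 1 : ℕ)) hβ0 hβ1
  have h₂ := rpow_le_rpow_of_exponent_le hd hβ1
  rw [rpow_one] at h₂
  push_cast at *
  rw [← add_assoc] at h₁
  linarith

theorem eventually_rpow_le_mul_rpow {a b k : ℝ} (hab : a < b) (hk : 0 < k) :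
    ∀ᶠ x : ℝ in atTop, x ^ a ≤ k * x ^ b := by
  have h₀ : Tendsto (fun x : ℝ => x ^ (a - b)) atTop (nhds 0) := by
    simpa using tendsto_rpow_neg_atTop (y := b - a) (by linarith)
  filter_upwards [h₀.eventually_le_const hk, eventually_gt_atTop 0] with x hx hx0
  calc x ^ a = x ^ (a - b) * x ^ b := by rw [← rpow_add hx0]; ring_nf
    _ ≤ k * x ^ b := mul_le_mul_of_nonneg_right hx (rpow_nonneg hx0.le b)

theorem eventually_rpow_add_rpow_le_mul_rpow {a b c k : ℝ} (ha : a < c) (hb : b < c)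
    (hk : 0 < k) : ∀ᶠ x : ℝ in atTop, x ^ a + x ^ b ≤ k * x ^ c := by
  filter_upwards [eventually_rpow_le_mul_rpow ha (half_pos hk),
    eventually_rpow_le_mul_rpow hb (half_pos hk)] with x hxa hxb
  linarith

theorem eventually_recurrence_slack {β p e k : ℝ} (hp : p < β) (he : e < β) (hβ : β < 1)
    (hk : 0 < k) :
    ∀ᶠ n : ℕ in atTop, (n : ℝ) ^ β + (n : ℝ) ^ p ≤ n / 2 ∧
      (n : ℝ) ^ e + (n : ℝ) ^ p ≤ k * ((n : ℝ) / 2) ^ β := by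
  suffices h : ∀ᶠ x : ℝ in atTop, x ^ β + x ^ p ≤ x / 2 ∧ x ^ e + x ^ p ≤ k * (x / 2) ^ β from
    tendsto_natCast_atTop_atTop.eventually h
  filter_upwards [eventually_rpow_add_rpow_le_mul_rpow hβ (hp.trans hβ) one_half_pos,
    eventually_rpow_add_rpow_le_mul_rpow he hp (div_pos hk (rpow_pos_of_pos two_pos β)),
    eventually_ge_atTop 0] with x hsmall hlarge hx
  rw [rpow_one] at hsmall
  rw [div_rpow hx zero_le_two]
  constructor <;> linarith [show k / 2 ^ β * x ^ β = k * (x ^ β / 2 ^ β) by ring]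

theorem sub_rpow_add_sub_rpow_add_le {β b e : ℝ} (hβ0 : 0 ≤ β) (hβ1 : β ≤ 1) (he : 0 ≤ e)
    {n n₁ n₂ : ℕ} (hsum : (n₁ : ℝ) + n₂ ≤ n + e) (hlow : ((n₁ : ℝ) + n₂) / 3 ≤ n₁)
    (hup : (n₁ : ℝ) ≤ 2 * ((n₁ : ℝ) + n₂) / 3) (hsmall : (n : ℝ) ^ β + b ≤ n / 2)
    (hlarge : e + b ≤ ((1 / 3 : ℝ) ^ β + (2 / 3 : ℝ) ^ β - 1) * ((n : ℝ) / 2) ^ β) :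
    ((n₁ : ℝ) - (n₁ : ℝ) ^ β) + ((n₂ : ℝ) - (n₂ : ℝ) ^ β) + b ≤ n - (n : ℝ) ^ β := by
  have h₁ := rpow_nonneg n₁.cast_nonneg β
  have h₂ := rpow_nonneg n₂.cast_nonneg β
  rcases lt_or_ge ((n₁ : ℝ) + n₂) (n / 2) with hS | hS
  · linarith
  set S : ℝ := n₁ + n₂
  have hgain := rpow_third_add_rpow_two_thirds_mul_le hβ0 hβ1 ⟨hlow, hup⟩
  rw [show S - n₁ = n₂ by ring] at hgain
  have hα : 1 ≤ (1 / 3 : ℝ) ^ β + (2 / 3 : ℝ) ^ β := by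
    have h₃ := rpow_le_rpow_of_exponent_ge (x := 1 / 3) (by norm_num) (by norm_num) hβ1
    have h₄ := rpow_le_rpow_of_exponent_ge (x := 2 / 3) (by norm_num) (by norm_num) hβ1
    rw [rpow_one] at h₃ h₄
    linarith
  have hmono := mul_le_mul_of_nonneg_left (rpow_le_rpow (by positivity) hS hβ0)
    (sub_nonneg.2 hα)
  have hexcess := natCast_sub_rpow_le hβ0 hβ1 he (m := n₁ + n₂) (by push_cast; exact hsum)
  push_cast at hexcess
  linarith

theorem divide_and_conquer_recurrence_general (t : ℕ) (ht : 1 ≤ t) (c₅ : ℝ) :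
    ∃ n0 : ℕ, ∀ c₆ : ℝ, 0 < c₆ → 2 * c₅ ≤ c₆ →
      ∀ n : ℕ, n0 ≤ n → ∀ n1 n2 : ℕ, ∀ b : ℝ,
        (n1 : ℝ) + n2 ≤ (n : ℝ) + (n : ℝ) ^ ((5 : ℝ)/6) →
        ((n1 + n2 : ℕ) : ℝ) / 3 ≤ (n1 : ℝ) → (n1 : ℝ) ≤ 2 * ((n1 + n2 : ℕ) : ℝ) / 3 →
        ((n1 + n2 : ℕ) : ℝ) / 3 ≤ (n2 : ℝ) → (n2 : ℝ) ≤ 2 * ((n1 + n2 : ℕ) : ℝ) / 3 →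
        0 ≤ b → b ≤ 2 * c₅ * (n : ℝ) ^ ((1 : ℝ) - 1/(4 * t)) →
        (fun k : ℕ => c₆ * ((k : ℝ) - (k : ℝ) ^ ((1 : ℝ) - 1/(7 * t)))) n1 +
          (fun k : ℕ => c₆ * ((k : ℝ) - (k : ℝ) ^ ((1 : ℝ) - 1/(7 * t)))) n2 + b ≤
          (fun k : ℕ => c₆ * ((k : ℝ) - (k : ℝ) ^ ((1 : ℝ) - 1/(7 * t)))) n := by
  have ht' : (1 : ℝ) ≤ t := Nat.one_le_cast.2 ht
  set β : ℝ := 1 - 1 / (7 * t)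
  set p : ℝ := 1 - 1 / (4 * t)
  have h7 : 1 / (7 * (t : ℝ)) ≤ 1 / 7 := one_div_le_one_div_of_le (by norm_num) (by linarith)
  have hβ0 : 0 ≤ β := by linarith
  have hβ1 : β < 1 := by linarith [show 0 < 1 / (7 * (t : ℝ)) by positivity]
  have he : (5 : ℝ) / 6 < β := by linarith
  have hp : p < β := by
    have : 1 / (7 * (t : ℝ)) < 1 / (4 * t) := one_div_lt_one_div_of_lt (by positivity) (by linarith)
    linarith
  obtain ⟨n0, hn0⟩ := eventually_atTop.1 (eventually_recurrence_slack hp he hβ1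
    (sub_pos.2 (one_lt_rpow_third_add_rpow_two_thirds hβ1)))
  refine ⟨n0, fun c₆ hc₆ hc n hn n₁ n₂ b hsum hlow hup _ _ _ hb => ?_⟩
  obtain ⟨hsmall, hlarge⟩ := hn0 n hn
  push_cast at hlow hup
  have hrec := sub_rpow_add_sub_rpow_add_le hβ0 hβ1.le (rpow_nonneg n.cast_nonneg _) hsum hlow hup
    hsmall hlarge
  have hb' : b ≤ c₆ * (n : ℝ) ^ p :=
    hb.trans (mul_le_mul_of_nonneg_right hc (rpow_nonneg n.cast_nonneg p))
  have hscaled := mul_le_mul_of_nonneg_left hrec hc₆.le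
  beta_reduce
  linarith

theorem divide_and_conquer_recurrence (t : ℕ) (ht : 1 ≤ t) (c₅ : ℝ) (hc₅ : 0 < c₅) :
    ∃ n0 : ℕ, ∀ c₆ : ℝ, 0 < c₆ → 2 * c₅ ≤ c₆ →
      ∀ n : ℕ, n0 ≤ n → ∀ n1 n2 : ℕ, ∀ b : ℝ,
        (n1 : ℝ) + n2 ≤ (n : ℝ) + (n : ℝ) ^ ((5 : ℝ)/6) →
        ((n1 + n2 : ℕ) : ℝ) / 3 ≤ (n1 : ℝ) → (n1 : ℝ) ≤ 2 * ((n1 + n2 : ℕ) : ℝ) / 3 →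
        ((n1 + n2 : ℕ) : ℝ) / 3 ≤ (n2 : ℝ) → (n2 : ℝ) ≤ 2 * ((n1 + n2 : ℕ) : ℝ) / 3 →
        0 ≤ b → b ≤ 2 * c₅ * (n : ℝ) ^ ((1 : ℝ) - 1/(4 * t)) →
        (fun k : ℕ => c₆ * ((k : ℝ) - (k : ℝ) ^ ((1 : ℝ) - 1/(7 * t)))) n1 +
          (fun k : ℕ => c₆ * ((k : ℝ) - (k : ℝ) ^ ((1 : ℝ) - 1/(7 * t)))) n2 + b ≤
          (fun k : ℕ => c₆ * ((k : ℝ) - (k : ℝ) ^ ((1 : ℝ) - 1/(7 * t)))) n :=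
  divide_and_conquer_recurrence_general t ht c₅
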